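/- Precision theorem: Let D be a quantale, sem : E → D, and let I[p] denote the interpretation of a regular expression p over E in D. Then I[p] equals the supremum over all words w = e₁⋯eₙ in the language of p of sem(e₁) ⊙ ⋯ ⊙ sem(eₙ) (with the empty word interpreted as 1). -/

import Mathlib

/-- A quantale: a complete lattice with a monoid operation distributing over
arbitrary suprema in both arguments. -/
structure Quantale' (K : Type*) [CompleteLattice K] where
  mul : K → K → K
  one : K
  mul_assoc : ∀ a b c, mul (mul a b) c = mul a (mul b c)
  one_mul : ∀ a, mul one a = a
  mul_one : ∀ a, mul a one = a
  mul_sSup : ∀ (a : K) (S : Set K), mul a (sSup S) = sSup (Set.image (mul a) S)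
  sSup_mul : ∀ (a : K) (S : Set K), mul (sSup S) a = sSup (Set.image (fun b => mul b a) S)

/-- n-fold product in a quantale: `a^0 = 1`, `a^(n+1) = a^n ⊙ a`. -/
def Quantale'.pow {K : Type*} [CompleteLattice K] (Q : Quantale' K) (a : K) : ℕ → K
  | 0 => Q.one
  | n + 1 => Q.mul (Q.pow a n) a

/-- Iteration: `a⋆ = sup_{n ∈ ℕ} a^n`. -/
def Quantale'.star {K : Type*} [CompleteLattice K] (Q : Quantale' K) (a : K) : K :=
  ⨆ n, Q.pow a n

/-- Regular expressions over alphabet `E`. -/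
inductive RegExp (E : Type*) where
  | zero : RegExp E
  | eps : RegExp E
  | char : E → RegExp E
  | plus : RegExp E → RegExp E → RegExp E
  | cat : RegExp E → RegExp E → RegExp E
  | star : RegExp E → RegExp E

/-- The language of a regular expression. -/
def RegExp.lang {E : Type*} : RegExp E → Language E
  | .zero => 0
  | .eps => 1
  | .char e => {[e]}
  | .plus p q => p.lang + q.lang
  | .cat p q => p.lang * q.lang
  | .star p => KStar.kstar p.lang

/-- Interpretation of a regular expression in a quantale. -/
def Quantale'.interp {K : Type*} [CompleteLattice K] {E : Type*} (Q : Quantale' K)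
    (sem : E → K) : RegExp E → K
  | .zero => ⊥
  | .eps => Q.one
  | .char e => sem e
  | .plus p q => Q.interp sem p ⊔ Q.interp sem q
  | .cat p q => Q.mul (Q.interp sem p) (Q.interp sem q)
  | .star p => Q.star (Q.interp sem p)

/-- Interpretation of a word: `sem e₁ ⊙ ⋯ ⊙ sem eₙ` (the empty word is `1`). -/
def Quantale'.semWord {K : Type*} [CompleteLattice K] {E : Type*} (Q : Quantale' K)
    (sem : E → K) (w : List E) : K :=
  w.foldr (fun e k => Q.mul (sem e) k) Q.one

/-!
Write `langInterp L` for `⨆ w ∈ L, semWord w`. Since `semWord` turns concatenation into `⊙`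
and `⊙` distributes over suprema in each argument, `langInterp` sends `0, 1, {[e]}`, `+`, `*`
and `⨆` of languages to `⊥, 1, sem e`, `⊔`, `⊙` and `⨆` in the quantale. As `L∗ = ⨆ₙ Lⁿ`,
it therefore satisfies the defining recursion of `interp` on `p.lang`, and the theorem
follows by structural induction on `p`.
-/

namespace Quantale'

variable {K : Type*} [CompleteLattice K] {E : Type*} (Q : Quantale' K) (sem : E → K)

theorem mul_sSup_sSup (S T : Set K) :
    Q.mul (sSup S) (sSup T) = sSup (Set.image2 Q.mul S T) := by
  rw [sSup_image2, Q.sSup_mul, sSup_image]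
  refine iSup_congr fun s => iSup_congr fun _ => ?_
  rw [Q.mul_sSup, sSup_image]

theorem semWord_append (u v : List E) :
    Q.semWord sem (u ++ v) = Q.mul (Q.semWord sem u) (Q.semWord sem v) := by
  induction u with
  | nil => exact (Q.one_mul _).symm
  | cons e u ih => exact (congrArg (Q.mul (sem e)) ih).trans (Q.mul_assoc _ _ _).symm

def langInterp (L : Language E) : K :=
  sSup (Q.semWord sem '' L)

theorem langInterp_zero : Q.langInterp sem 0 = ⊥ :=
  (congrArg sSup (Set.image_empty _)).trans sSup_empty

theorem langInterp_one : Q.langInterp sem 1 = Q.one :=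
  (congrArg sSup (Set.image_singleton (a := []))).trans sSup_singleton

theorem langInterp_singleton (e : E) : Q.langInterp sem {[e]} = sem e :=
  ((congrArg sSup (Set.image_singleton (a := [e]))).trans sSup_singleton).trans (Q.mul_one _)

theorem langInterp_add (L M : Language E) :
    Q.langInterp sem (L + M) = Q.langInterp sem L ⊔ Q.langInterp sem M :=
  (congrArg sSup (Set.image_union _ (L : Set (List E)) M)).trans sSup_union

theorem langInterp_mul (L M : Language E) :
    Q.langInterp sem (L * M) = Q.mul (Q.langInterp sem L) (Q.langInterp sem M) :=
  (congrArg sSup (Set.image_image2_distrib (s := (L : Set (List E))) (t := M)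
    (Q.semWord_append sem))).trans (Q.mul_sSup_sSup _ _).symm

theorem langInterp_pow (L : Language E) (n : ℕ) :
    Q.langInterp sem (L ^ n) = Q.pow (Q.langInterp sem L) n := by
  induction n with
  | zero => exact Q.langInterp_one sem
  | succ n ih => rw [pow_succ, langInterp_mul, ih, pow]

theorem langInterp_iSup {ι : Sort*} (L : ι → Language E) :
    Q.langInterp sem (⨆ i, L i) = ⨆ i, Q.langInterp sem (L i) :=
  (congrArg sSup (Set.image_iUnion (s := fun i => (L i : Set (List E))))).trans (sSup_iUnion _)

theorem langInterp_kstar (L : Language E) :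
    Q.langInterp sem (KStar.kstar L) = Q.star (Q.langInterp sem L) := by
  simp only [Language.kstar_eq_iSup_pow, langInterp_iSup, langInterp_pow, star]

end Quantale'

/-- Precision: over a quantale, the interpretation of `p` is exactly the supremum of the
interpretations of the words in the language of `p`. -/
theorem quantale_precision {K : Type*} [CompleteLattice K] {E : Type*} (Q : Quantale' K)
    (sem : E → K) (p : RegExp E) :
    Q.interp sem p = sSup (Q.semWord sem '' p.lang) := by
  change Q.interp sem p = Q.langInterp sem p.lang
  induction p with
  | zero => exact (Q.langInterp_zero sem).symm
  | eps => exact (Q.langInterp_one sem).symm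
  | char e => exact (Q.langInterp_singleton sem e).symm
  | plus p q ihp ihq => rw [RegExp.lang, Q.langInterp_add, ← ihp, ← ihq, Quantale'.interp]
  | cat p q ihp ihq => rw [RegExp.lang, Q.langInterp_mul, ← ihp, ← ihq, Quantale'.interp]
  | star p ih => rw [RegExp.lang, Q.langInterp_kstar, ← ih, Quantale'.interp]
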